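/- Let u₁ and u₂ be twice continuously differentiable solutions on [0,1] of u_i''(s) + α_i u_i(s)/√((1-s)² + u_i(s)²) = 0 with u_i'(0) = 0 and u_i(1) = 0. Then ∫₀¹ u₁(s) u₂(s) [α₁/√((1-s)² + u₁(s)²) − α₂/√((1-s)² + u₂(s)²)] ds = 0. -/

import Mathlib

open Real

/-!
Multiplying the equation of `u₁` by `u₂`, that of `u₂` by `u₁` and subtracting shows that the
integrand is `u₁ u₂'' - u₁'' u₂`, the derivative of the Wronskian `u₁ u₂' - u₁' u₂`. So the
integral is the difference of the Wronskian at the endpoints, and it vanishes at `0` because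
`u₁'(0) = u₂'(0) = 0` and at `1` because `u₁(1) = u₂(1) = 0`.
-/

noncomputable def wronskian (u v : ℝ → ℝ) (t : ℝ) : ℝ :=
  u t * deriv v t - deriv u t * v t

section Wronskian

variable {u v : ℝ → ℝ}

theorem hasDerivAt_wronskian (hu : ContDiff ℝ 2 u) (hv : ContDiff ℝ 2 v) (t : ℝ) :
    HasDerivAt (wronskian u v) (u t * deriv (deriv v) t - deriv (deriv u) t * v t) t := by
  have hu₁ := (hu.differentiable two_ne_zero t).hasDerivAt
  have hv₁ := (hv.differentiable two_ne_zero t).hasDerivAt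
  have hu₂ := (hu.differentiable_deriv_two t).hasDerivAt
  have hv₂ := (hv.differentiable_deriv_two t).hasDerivAt
  exact ((hu₁.mul hv₂).sub (hu₂.mul hv₁)).congr_deriv (by ring)

theorem integral_mul_deriv_deriv_sub_eq_wronskian (hu : ContDiff ℝ 2 u) (hv : ContDiff ℝ 2 v)
    (a b : ℝ) :
    ∫ t in a..b, (u t * deriv (deriv v) t - deriv (deriv u) t * v t) =
      wronskian u v b - wronskian u v a := by
  have hcont : Continuous fun t => u t * deriv (deriv v) t - deriv (deriv u) t * v t :=
    (hu.continuous.mul (hv.deriv' (n := 1)).continuous_deriv_one).sub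
      ((hu.deriv' (n := 1)).continuous_deriv_one.mul hv.continuous)
  exact intervalIntegral.integral_eq_sub_of_hasDerivAt
    (fun t _ => hasDerivAt_wronskian hu hv t) (hcont.intervalIntegrable a b)

end Wronskian

theorem nonlinear_orthogonality_homogeneous_general (u₁ u₂ : ℝ → ℝ) (α₁ α₂ : ℝ)
    (hu₁ : ContDiff ℝ 2 u₁) (hu₂ : ContDiff ℝ 2 u₂)
    (hode₁ : ∀ s ∈ Set.Icc (0:ℝ) 1,
      deriv (deriv u₁) s + α₁ * u₁ s / Real.sqrt ((1 - s) ^ 2 + (u₁ s) ^ 2) = 0)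
    (hode₂ : ∀ s ∈ Set.Icc (0:ℝ) 1,
      deriv (deriv u₂) s + α₂ * u₂ s / Real.sqrt ((1 - s) ^ 2 + (u₂ s) ^ 2) = 0)
    (hbc₁ : deriv u₁ 0 = 0) (hbc₁' : u₁ 1 = 0)
    (hbc₂ : deriv u₂ 0 = 0) (hbc₂' : u₂ 1 = 0) :
    (∫ s in (0:ℝ)..1, u₁ s * u₂ s *
        (α₁ / Real.sqrt ((1 - s) ^ 2 + (u₁ s) ^ 2) -
          α₂ / Real.sqrt ((1 - s) ^ 2 + (u₂ s) ^ 2))) = 0 := by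
  have integrand_eq : Set.EqOn
      (fun s => u₁ s * u₂ s *
        (α₁ / Real.sqrt ((1 - s) ^ 2 + (u₁ s) ^ 2) -
          α₂ / Real.sqrt ((1 - s) ^ 2 + (u₂ s) ^ 2)))
      (fun s => u₁ s * deriv (deriv u₂) s - deriv (deriv u₁) s * u₂ s) (Set.uIcc 0 1) := by
    intro s hs
    rw [Set.uIcc_of_le zero_le_one] at hs
    dsimp only
    rw [eq_neg_of_add_eq_zero_left (hode₁ s hs), eq_neg_of_add_eq_zero_left (hode₂ s hs)]
    ring
  rw [intervalIntegral.integral_congr integrand_eq,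
    integral_mul_deriv_deriv_sub_eq_wronskian hu₁ hu₂]
  simp [wronskian, hbc₁, hbc₁', hbc₂, hbc₂']

/-- Nonlinear orthogonality relation for the homogeneous helicoseir. -/
theorem nonlinear_orthogonality_homogeneous (u₁ u₂ : ℝ → ℝ) (α₁ α₂ : ℝ)
    (hα₁ : 0 < α₁) (hα₂ : 0 < α₂)
    (hu₁ : ContDiff ℝ 2 u₁) (hu₂ : ContDiff ℝ 2 u₂)
    (hode₁ : ∀ s ∈ Set.Icc (0:ℝ) 1,
      deriv (deriv u₁) s + α₁ * u₁ s / Real.sqrt ((1 - s) ^ 2 + (u₁ s) ^ 2) = 0)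
    (hode₂ : ∀ s ∈ Set.Icc (0:ℝ) 1,
      deriv (deriv u₂) s + α₂ * u₂ s / Real.sqrt ((1 - s) ^ 2 + (u₂ s) ^ 2) = 0)
    (hbc₁ : deriv u₁ 0 = 0) (hbc₁' : u₁ 1 = 0)
    (hbc₂ : deriv u₂ 0 = 0) (hbc₂' : u₂ 1 = 0) :
    (∫ s in (0:ℝ)..1, u₁ s * u₂ s *
        (α₁ / Real.sqrt ((1 - s) ^ 2 + (u₁ s) ^ 2) -
          α₂ / Real.sqrt ((1 - s) ^ 2 + (u₂ s) ^ 2))) = 0 :=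
  nonlinear_orthogonality_homogeneous_general u₁ u₂ α₁ α₂ hu₁ hu₂ hode₁ hode₂ hbc₁ hbc₁' hbc₂ hbc₂'
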